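/- arXiv:1306.0272 — 2 statements merged into one kernel-verified Lean document; each statement's English description precedes it below -/
import Mathlib

section
/- For n ≥ 1, t > 0 and x ∈ ℝⁿ, the Fourier integral (2π)^{-n/2} ∫_{ℝⁿ} e^{-t|ξ|} e^{i x·ξ} dξ equals (2^{n/2} Γ((n+1)/2)/√π) · t / (t² + |x|²)^{(n+1)/2}. -/
/-!
Subordination writes `e^{-r}` as a superposition of Gaussians,
`√π e^{-r} = ∫₀^∞ s^{-1/2} e^{-s} e^{-r²/(4s)} ds`. After `s = v²` this is the
Cauchy–Schlömilch integral `∫₀^∞ e^{-(v - a/v)²} dv = √π / 2`: the map `v ↦ v - a/v` sends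
`(0, ∞)` onto `ℝ` with Jacobian `1 + a/v²`, and the substitution `v ↦ a/v` shows that the
`a/v²` part contributes as much as the rest. Exchanging the order of integration, each Gaussian
`e^{-t²|ξ|²/(4s)}` has an explicit Fourier transform, and the remaining integral over `s` is a
Gamma integral.
-/

open MeasureTheory Real Set

section CauchySchlomilch

variable {E : Type*} [NormedAddCommGroup E] [NormedSpace ℝ E] {a : ℝ}

lemma image_sub_div_Ioi_eq_univ (ha : 0 < a) : (fun v : ℝ => v - a / v) '' Ioi 0 = univ := by
  refine eq_univ_of_forall fun w => ?_
  have hroot : √(w ^ 2 + 4 * a) ^ 2 = w ^ 2 + 4 * a := sq_sqrt (by positivity)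
  have hpos : 0 < w + √(w ^ 2 + 4 * a) := by nlinarith [sqrt_nonneg (w ^ 2 + 4 * a)]
  refine ⟨(w + √(w ^ 2 + 4 * a)) / 2, half_pos hpos, ?_⟩
  field_simp
  nlinarith

lemma strictMonoOn_sub_div (ha : 0 < a) : StrictMonoOn (fun v : ℝ => v - a / v) (Ioi 0) :=
  fun _ hu _ _ huv => sub_lt_sub huv (div_lt_div_of_pos_left ha hu huv)

lemma hasDerivAt_sub_div {v : ℝ} (hv : v ≠ 0) :
    HasDerivAt (fun v : ℝ => v - a / v) (1 + a / v ^ 2) v := by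
  simpa only [div_eq_mul_inv, mul_neg, sub_neg_eq_add] using
    (hasDerivAt_id' v).fun_sub ((hasDerivAt_inv hv).const_mul a)

lemma abs_one_add_div_sq_smul (ha : 0 ≤ a) (f : ℝ → E) :
    (fun v => |1 + a / v ^ 2| • f (v - a / v)) = fun v => (1 + a / v ^ 2) • f (v - a / v) :=
  funext fun v => by rw [abs_of_nonneg (by positivity)]

lemma integral_Ioi_one_add_div_sq_smul_comp_sub_div (ha : 0 < a) (f : ℝ → E) :
    ∫ v in Ioi 0, (1 + a / v ^ 2) • f (v - a / v) = ∫ w, f w := by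
  rw [← abs_one_add_div_sq_smul ha.le, ← integral_image_eq_integral_abs_deriv_smul
    measurableSet_Ioi (fun v hv => (hasDerivAt_sub_div (ne_of_gt hv)).hasDerivWithinAt)
    (strictMonoOn_sub_div ha).injOn, image_sub_div_Ioi_eq_univ ha, setIntegral_univ]

lemma integrableOn_Ioi_one_add_div_sq_smul_comp_sub_div (ha : 0 < a) {f : ℝ → E}
    (hf : Integrable f) : IntegrableOn (fun v => (1 + a / v ^ 2) • f (v - a / v)) (Ioi 0) := by
  rw [← abs_one_add_div_sq_smul ha.le, ← integrableOn_image_iff_integrableOn_abs_deriv_smul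
    measurableSet_Ioi (fun v hv => (hasDerivAt_sub_div (ne_of_gt hv)).hasDerivWithinAt)
    (strictMonoOn_sub_div ha).injOn, image_sub_div_Ioi_eq_univ ha, integrableOn_univ]
  exact hf

lemma integrableOn_Ioi_comp_sub_div (ha : 0 ≤ a) {f : ℝ → E}
    (h : IntegrableOn (fun v => (1 + a / v ^ 2) • f (v - a / v)) (Ioi 0)) :
    IntegrableOn (fun v => f (v - a / v)) (Ioi 0) := by
  have hbound : ∀ v : ℝ, ‖(1 + a / v ^ 2)⁻¹‖ ≤ 1 := fun v => by
    rw [norm_inv, Real.norm_of_nonneg (by positivity)]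
    exact inv_le_one_of_one_le₀ (le_add_of_nonneg_right (by positivity))
  refine (h.bdd_smul 1 (φ := fun v => (1 + a / v ^ 2)⁻¹)
    (by fun_prop : Measurable _).aestronglyMeasurable (ae_of_all _ hbound)).congr
    (ae_of_all _ fun v => ?_)
  exact inv_smul_smul₀ (by positivity) _

lemma integral_Ioi_div_sq_smul_comp_sub_div (ha : 0 < a) (f : ℝ → E) :
    ∫ v in Ioi 0, (a / v ^ 2) • f (v - a / v) = ∫ v in Ioi 0, f (a / v - v) := by
  have hderiv : ∀ v ∈ Ioi (0 : ℝ),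
      HasDerivWithinAt (fun v => a / v) (-(a / v ^ 2)) (Ioi 0) v := fun v hv => by
    simpa only [div_eq_mul_inv, mul_neg] using
      ((hasDerivAt_inv (ne_of_gt hv)).const_mul a).hasDerivWithinAt
  have hinvol : ∀ v : ℝ, a / (a / v) = v := fun v => div_div_cancel₀ ha.ne'
  have himage : (fun v => a / v) '' Ioi 0 = Ioi 0 :=
    Subset.antisymm (image_subset_iff.2 fun v hv => div_pos ha hv)
      fun u hu => ⟨a / u, div_pos ha hu, hinvol u⟩
  have hinj : InjOn (fun v => a / v) (Ioi 0) := fun u _ v _ h => by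
    simpa only [hinvol] using congrArg (a / ·) h
  conv_rhs =>
    rw [← himage, integral_image_eq_integral_abs_deriv_smul measurableSet_Ioi hderiv hinj]
  simp only [hinvol, abs_neg, abs_div, abs_of_pos ha, abs_sq]

theorem integral_Ioi_comp_sub_div_of_even (ha : 0 < a) {f : ℝ → E} (hf : Integrable f)
    (heven : ∀ w, f (-w) = f w) : ∫ v in Ioi 0, f (v - a / v) = (2 : ℝ)⁻¹ • ∫ w, f w := by
  have hweighted := integrableOn_Ioi_one_add_div_sq_smul_comp_sub_div ha hf
  have hcomp := integrableOn_Ioi_comp_sub_div ha.le hweighted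
  have hrest : IntegrableOn (fun v => (a / v ^ 2) • f (v - a / v)) (Ioi 0) :=
    (hweighted.sub hcomp).congr (ae_of_all _ fun v => by
      simp only [Pi.sub_apply, add_smul, one_smul, add_sub_cancel_left])
  have hreflect : ∫ v in Ioi 0, (a / v ^ 2) • f (v - a / v) = ∫ v in Ioi 0, f (v - a / v) := by
    rw [integral_Ioi_div_sq_smul_comp_sub_div ha]
    exact setIntegral_congr_fun measurableSet_Ioi fun v _ => by rw [← neg_sub, heven]
  rw [← integral_Ioi_one_add_div_sq_smul_comp_sub_div ha]
  simp only [add_smul, one_smul]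
  rw [integral_add hcomp hrest, hreflect, ← two_smul ℝ, smul_smul, inv_mul_cancel₀ two_ne_zero,
    one_smul]

end CauchySchlomilch

lemma integral_Ioi_exp_neg_sq_sub_sq_div_sq {a : ℝ} (ha : 0 ≤ a) :
    ∫ v in Ioi 0, exp (-v ^ 2 - a ^ 2 / v ^ 2) = √π / 2 * exp (-(2 * a)) := by
  rcases ha.eq_or_lt with rfl | ha
  · simpa using integral_gaussian_Ioi 1
  have hsquare : ∀ v ∈ Ioi (0 : ℝ),
      exp (-v ^ 2 - a ^ 2 / v ^ 2) = exp (-(2 * a)) * exp (-(v - a / v) ^ 2) :=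
    fun v (hv : 0 < v) => by
      rw [← exp_add]
      congr 1
      field_simp
      ring
  have hfold := integral_Ioi_comp_sub_div_of_even ha (f := fun w => exp (-w ^ 2))
    (by simpa using integrable_exp_neg_mul_sq one_pos) (by simp)
  rw [setIntegral_congr_fun measurableSet_Ioi hsquare, integral_const_mul, hfold,
    show ∫ w, exp (-w ^ 2) = √π by simpa using integral_gaussian 1]
  ring

noncomputable def subordinationKernel (r s : ℝ) : ℝ :=
  s ^ (-(1 / 2 : ℝ)) * exp (-s - r ^ 2 / (4 * s))

theorem integral_subordinationKernel {r : ℝ} (hr : 0 ≤ r) :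
    ∫ s in Ioi 0, subordinationKernel r s = √π * exp (-r) := by
  rw [← integral_comp_rpow_Ioi_of_pos two_pos]
  have hsubst : ∀ v ∈ Ioi (0 : ℝ),
      (2 * v ^ ((2 : ℝ) - 1)) • subordinationKernel r (v ^ (2 : ℝ)) =
        2 * exp (-v ^ 2 - (r / 2) ^ 2 / v ^ 2) := fun v (hv : 0 < v) => by
    rw [subordinationKernel, rpow_two, ← rpow_natCast, ← rpow_mul hv.le]
    norm_num [rpow_neg_one]
    field_simp
    ring_nf
  rw [setIntegral_congr_fun measurableSet_Ioi hsubst, integral_const_mul,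
    integral_Ioi_exp_neg_sq_sub_sq_div_sq (by positivity)]
  ring_nf

lemma div_sq_rpow_mul_one_div_one_add_div_sq_rpow {c t A : ℝ} (hc : 0 ≤ c) (ht : 0 < t)
    (hA : 0 ≤ A) (p : ℝ) :
    (c / t ^ 2) ^ p * (1 / (1 + A / t ^ 2)) ^ (p + 1 / 2) =
      c ^ p * (t / (t ^ 2 + A) ^ (p + 1 / 2)) := by
  have ht2 : 0 < t ^ 2 := by positivity
  rw [show 1 / (1 + A / t ^ 2) = t ^ 2 / (t ^ 2 + A) by field_simp, div_rpow hc ht2.le,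
    div_rpow ht2.le (by positivity), rpow_add ht2, ← sqrt_eq_rpow, sqrt_sq ht.le]
  have : (t ^ 2) ^ p ≠ 0 := (rpow_pos_of_pos ht2 p).ne'
  field_simp

section Fourier

open Complex

variable {V : Type*} [NormedAddCommGroup V] [InnerProductSpace ℝ V] {t s : ℝ}

lemma subordinationKernel_mul_cexp_inner (x ξ : V) :
    (subordinationKernel (t * ‖ξ‖) s : ℂ) * cexp (I * inner ℝ x ξ) =
      ((s ^ (-(1 / 2 : ℝ)) * Real.exp (-s) : ℝ) : ℂ) *
        cexp (-((t ^ 2 / (4 * s) : ℝ) : ℂ) * (‖ξ‖ : ℂ) ^ 2 + I * inner ℝ x ξ) := by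
  rw [subordinationKernel, ofReal_mul, ofReal_mul, ofReal_exp, ofReal_exp, mul_assoc,
    mul_assoc, ← Complex.exp_add, ← Complex.exp_add]
  push_cast
  ring_nf

lemma norm_subordinationKernel_mul_cexp_inner (hs : 0 < s) (x ξ : V) :
    ‖(subordinationKernel (t * ‖ξ‖) s : ℂ) * cexp (I * inner ℝ x ξ)‖ =
      subordinationKernel (t * ‖ξ‖) s := by
  rw [norm_mul, mul_comm I, norm_exp_ofReal_mul_I, mul_one, norm_real, norm_of_nonneg]
  exact mul_nonneg (rpow_nonneg hs.le _) (Real.exp_pos _).le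

variable [FiniteDimensional ℝ V] [MeasurableSpace V] [BorelSpace V]

lemma integrable_subordinationKernel_mul_cexp_inner (ht : t ≠ 0) (hs : 0 < s) (x : V) :
    Integrable fun ξ : V => (subordinationKernel (t * ‖ξ‖) s : ℂ) * cexp (I * inner ℝ x ξ) := by
  simp_rw [subordinationKernel_mul_cexp_inner]
  refine (GaussianFourier.integrable_cexp_neg_mul_sq_norm_add ?_ I x).const_mul _
  rw [ofReal_re]
  positivity

lemma integral_subordinationKernel_mul_cexp_inner (ht : 0 < t) (hs : 0 < s) (x : V) :
    ∫ ξ : V, (subordinationKernel (t * ‖ξ‖) s : ℂ) * cexp (I * inner ℝ x ξ) =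
      (((4 * π / t ^ 2) ^ ((Module.finrank ℝ V : ℝ) / 2) *
        (s ^ (((Module.finrank ℝ V : ℝ) + 1) / 2 - 1) *
          Real.exp (-((1 + ‖x‖ ^ 2 / t ^ 2) * s))) : ℝ) : ℂ) := by
  have hb : 0 < ((t ^ 2 / (4 * s) : ℝ) : ℂ).re := by rw [ofReal_re]; positivity
  simp_rw [subordinationKernel_mul_cexp_inner]
  rw [integral_const_mul, GaussianFourier.integral_cexp_neg_mul_sq_norm_add hb]
  set d := (Module.finrank ℝ V : ℝ)
  have hpow : ((π : ℂ) / (t ^ 2 / (4 * s) : ℝ)) ^ ((Module.finrank ℝ V : ℂ) / 2) =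
      ((π / (t ^ 2 / (4 * s))) ^ (d / 2) : ℝ) := by
    rw [← ofReal_div, ofReal_cpow (by positivity)]
    push_cast
    rfl
  have hexp : cexp (I ^ 2 * (‖x‖ : ℂ) ^ 2 / (4 * (t ^ 2 / (4 * s) : ℝ))) =
      (Real.exp (-(s * ‖x‖ ^ 2 / t ^ 2)) : ℂ) := by
    rw [I_sq, ofReal_exp]
    congr 1
    push_cast
    field_simp
  rw [hpow, hexp, ← ofReal_mul, ← ofReal_mul]
  congr 1
  rw [show π / (t ^ 2 / (4 * s)) = 4 * π / t ^ 2 * s by field_simp,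
    mul_rpow (by positivity) hs.le, show (d + 1) / 2 - 1 = -(1 / 2) + d / 2 by ring, rpow_add hs,
    show -((1 + ‖x‖ ^ 2 / t ^ 2) * s) = -s + -(s * ‖x‖ ^ 2 / t ^ 2) by field_simp; ring,
    Real.exp_add]
  ring

lemma integral_subordinationKernel_mul_norm (ht : 0 < t) (hs : 0 < s) :
    ∫ ξ : V, subordinationKernel (t * ‖ξ‖) s =
      (4 * π / t ^ 2) ^ ((Module.finrank ℝ V : ℝ) / 2) *
        (Real.exp (-s) * s ^ (((Module.finrank ℝ V : ℝ) + 1) / 2 - 1)) := by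
  have h := integral_subordinationKernel_mul_cexp_inner ht hs (0 : V)
  simp only [inner_zero_left, ofReal_zero, mul_zero, Complex.exp_zero, mul_one, norm_zero, ne_eq,
    OfNat.ofNat_ne_zero, not_false_eq_true, zero_pow, zero_div, add_zero, one_mul,
    integral_complex_ofReal, ofReal_inj] at h
  rw [h, mul_comm (s ^ _)]

lemma integrable_uncurry_subordinationKernel_mul_cexp_inner (ht : 0 < t) (x : V) :
    Integrable (Function.uncurry fun (ξ : V) (s : ℝ) =>
      (subordinationKernel (t * ‖ξ‖) s : ℂ) * cexp (I * inner ℝ x ξ))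
      (volume.prod (volume.restrict (Ioi 0))) := by
  have hmeas : AEStronglyMeasurable (Function.uncurry fun (ξ : V) (s : ℝ) =>
      (subordinationKernel (t * ‖ξ‖) s : ℂ) * cexp (I * inner ℝ x ξ))
      (volume.prod (volume.restrict (Ioi 0))) := by
    refine Measurable.aestronglyMeasurable ?_
    unfold Function.uncurry subordinationKernel
    fun_prop
  refine (integrable_prod_iff' hmeas).2 ⟨?_, ?_⟩
  · filter_upwards [ae_restrict_mem measurableSet_Ioi] with s hs
    exact integrable_subordinationKernel_mul_cexp_inner ht.ne' hs x
  · refine IntegrableOn.congr_fun ((GammaIntegral_convergent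
      (s := ((Module.finrank ℝ V : ℝ) + 1) / 2) (by positivity)).const_mul
      ((4 * π / t ^ 2) ^ ((Module.finrank ℝ V : ℝ) / 2))) (fun s hs => ?_) measurableSet_Ioi
    simp only [Function.uncurry_apply_pair, norm_subordinationKernel_mul_cexp_inner hs,
      integral_subordinationKernel_mul_norm ht hs]

theorem integral_cexp_neg_mul_norm_mul_cexp_inner (ht : 0 < t) (x : V) :
    ∫ ξ : V, cexp (-(t : ℂ) * ‖ξ‖) * cexp (I * inner ℝ x ξ) =
      (((4 * π) ^ ((Module.finrank ℝ V : ℝ) / 2) *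
        Real.Gamma (((Module.finrank ℝ V : ℝ) + 1) / 2) / √π *
          (t / (t ^ 2 + ‖x‖ ^ 2) ^ (((Module.finrank ℝ V : ℝ) + 1) / 2)) : ℝ) : ℂ) := by
  have hsubordinate : ∀ ξ : V, cexp (-(t : ℂ) * ‖ξ‖) * cexp (I * inner ℝ x ξ) =
      (√π : ℂ)⁻¹ * ∫ s in Ioi 0,
        (subordinationKernel (t * ‖ξ‖) s : ℂ) * cexp (I * inner ℝ x ξ) := fun ξ => by
    have hsqrt : (√π : ℂ) ≠ 0 := ofReal_ne_zero.2 (sqrt_pos.2 pi_pos).ne'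
    rw [integral_mul_const, integral_complex_ofReal, integral_subordinationKernel (by positivity),
      ← mul_assoc, ofReal_mul, ← mul_assoc, inv_mul_cancel₀ hsqrt, one_mul, ofReal_exp]
    push_cast
    ring_nf
  simp_rw [hsubordinate]
  rw [integral_const_mul, integral_integral_swap
      (integrable_uncurry_subordinationKernel_mul_cexp_inner ht x),
    setIntegral_congr_fun measurableSet_Ioi
      fun s hs => integral_subordinationKernel_mul_cexp_inner ht hs x,
    integral_complex_ofReal, integral_const_mul,
    integral_rpow_mul_exp_neg_mul_Ioi (by positivity) (by positivity), ← ofReal_inv,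
    ← ofReal_mul]
  congr 1
  rw [add_div _ 1]
  linear_combination (Real.Gamma _ / √π) *
    div_sq_rpow_mul_one_div_one_add_div_sq_rpow (c := 4 * π) (by positivity) ht
      (sq_nonneg ‖x‖) _

end Fourier

theorem fourier_transform_exp_neg_norm_general (n : ℕ) (t : ℝ) (ht : 0 < t)
    (x : EuclideanSpace ℝ (Fin n)) :
    (2 * π : ℂ) ^ (-(n : ℂ) / 2) *
      ∫ ξ : EuclideanSpace ℝ (Fin n),
        Complex.exp (-(t : ℂ) * (‖ξ‖ : ℂ)) *
          Complex.exp (Complex.I * (∑ j, x j * ξ j : ℝ)) =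
    ((2 : ℝ) ^ ((n : ℝ) / 2) * Real.Gamma ((n + 1) / 2) / Real.sqrt π *
      (t / (t ^ 2 + ‖x‖ ^ 2) ^ (((n : ℝ) + 1) / 2)) : ℝ) := by
  have hinner : ∀ ξ : EuclideanSpace ℝ (Fin n), ∑ j, x j * ξ j = inner ℝ x ξ := fun ξ => by
    simp [PiLp.inner_apply, mul_comm]
  have hcpow : (2 * π : ℂ) ^ (-(n : ℂ) / 2) = ((2 * π) ^ (-((n : ℝ) / 2)) : ℝ) := by
    rw [Complex.ofReal_cpow (by positivity)]
    push_cast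
    ring_nf
  have hfour : (4 * π) ^ ((n : ℝ) / 2) = 2 ^ ((n : ℝ) / 2) * (2 * π) ^ ((n : ℝ) / 2) := by
    rw [← mul_rpow (by norm_num) (by positivity), ← mul_assoc]
    norm_num
  simp_rw [hinner]
  rw [integral_cexp_neg_mul_norm_mul_cexp_inner ht x, finrank_euclideanSpace_fin, hcpow,
    ← Complex.ofReal_mul, hfour, rpow_neg (by positivity)]
  have : (2 * π) ^ ((n : ℝ) / 2) ≠ 0 := (rpow_pos_of_pos (by positivity) _).ne'
  field_simp

theorem fourier_transform_exp_neg_norm (n : ℕ) (hn : 1 ≤ n) (t : ℝ) (ht : 0 < t)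
    (x : EuclideanSpace ℝ (Fin n)) :
    (2 * π : ℂ) ^ (-(n : ℂ) / 2) *
      ∫ ξ : EuclideanSpace ℝ (Fin n),
        Complex.exp (-(t : ℂ) * (‖ξ‖ : ℂ)) *
          Complex.exp (Complex.I * (∑ j, x j * ξ j : ℝ)) =
    ((2 : ℝ) ^ ((n : ℝ) / 2) * Real.Gamma ((n + 1) / 2) / Real.sqrt π *
      (t / (t ^ 2 + ‖x‖ ^ 2) ^ (((n : ℝ) + 1) / 2)) : ℝ) :=
  fourier_transform_exp_neg_norm_general n t ht x
end

section
/- Let n ≥ 1, α > 0, γ > 0, and let f: (0,∞) → (0,∞) be differentiable with f'(t) ≤ −α f(t)^{1+1/n} + γ f(t) for all t > 0. Then for all t > 0, f(t) ≤ (2n/α)^n e^{γ t/2} t^{-n}. -/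
/-!
Put `c = n`. The substitution `g(s) = e^{γ s / c} f(s)^{-1/c}` linearises the differential
inequality: it becomes `g' ≥ (α / c) e^{γ s / c}`. Integrating over `[t/2, t]` and dropping
`g(t/2) > 0` gives `g(t) ≥ (α / c) e^{γ t / (2c)} (t / 2)`, which solves for the bound
on `f(t)`.
-/

open Real Set

lemma mul_sub_le_sub_of_le_hasDerivAt {g g' : ℝ → ℝ} {a b m : ℝ} (hab : a ≤ b)
    (hg : ∀ x, a ≤ x → HasDerivAt g (g' x) x) (hm : ∀ x, a < x → m ≤ g' x) :
    m * (b - a) ≤ g b - g a := by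
  refine (convex_Ici a).mul_sub_le_image_sub_of_le_deriv
    (fun x hx => (hg x hx).continuousAt.continuousWithinAt) ?_ ?_ a (mem_Ici.2 le_rfl) b hab hab
  · rw [interior_Ici]
    exact fun x hx => (hg x (le_of_lt hx)).differentiableAt.differentiableWithinAt
  · rw [interior_Ici]
    exact fun x hx => (hg x (le_of_lt hx)).deriv ▸ hm x hx

lemma hasDerivAt_exp_mul_rpow {f : ℝ → ℝ} {fd κ p s : ℝ} (hf : HasDerivAt f fd s)
    (hpos : 0 < f s) :
    HasDerivAt (fun x => exp (κ * x) * f x ^ p)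
      (κ * exp (κ * s) * f s ^ p + exp (κ * s) * (fd * p * f s ^ (p - 1))) s := by
  have hexp : HasDerivAt (fun x => exp (κ * x)) (κ * exp (κ * s)) s := by
    simpa [mul_comm] using ((hasDerivAt_id s).const_mul κ).exp
  exact hexp.mul (hf.rpow_const (Or.inl hpos.ne'))

lemma div_le_of_le_neg_mul_rpow_add {α γ c x y : ℝ} (hc : 0 < c) (hx : 0 < x)
    (hy : y ≤ -α * x ^ (1 + 1 / c) + γ * x) :
    α / c ≤ γ / c * x ^ (-(1 / c)) + y * (-(1 / c)) * x ^ (-(1 / c) - 1) := by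
  set p := x ^ (-(1 / c) - 1)
  have hpow : x ^ (1 + 1 / c) * p = 1 := by
    rw [← rpow_add hx, show 1 + 1 / c + (-(1 / c) - 1) = 0 by ring, rpow_zero]
  have hlin : x * p = x ^ (-(1 / c)) := by
    conv_lhs => rw [← rpow_one x]
    rw [← rpow_add hx]
    ring_nf
  have hgap : 0 ≤ 1 / c * p * (-α * x ^ (1 + 1 / c) + γ * x - y) := by
    have : 0 < p := rpow_pos_of_pos hx _
    have : 0 ≤ -α * x ^ (1 + 1 / c) + γ * x - y := by linarith
    positivity
  rw [← hlin]
  linear_combination hgap - α / c * hpow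

section

variable {f f' : ℝ → ℝ} {α γ c : ℝ}

lemma mul_exp_le_exp_mul_rpow_of_deriv_le (hc : 0 < c) (hα : 0 ≤ α) (hγ : 0 ≤ γ)
    (hfpos : ∀ t, 0 < t → 0 < f t) (hderiv : ∀ t, 0 < t → HasDerivAt f (f' t) t)
    (hineq : ∀ t, 0 < t → f' t ≤ -α * f t ^ (1 + 1 / c) + γ * f t) {t : ℝ} (ht : 0 < t) :
    α / c * exp (γ / c * (t / 2)) * (t / 2) ≤ exp (γ / c * t) * f t ^ (-(1 / c)) := by
  set g := fun s => exp (γ / c * s) * f s ^ (-(1 / c))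
  have hgrowth : α / c * exp (γ / c * (t / 2)) * (t - t / 2) ≤ g t - g (t / 2) := by
    refine mul_sub_le_sub_of_le_hasDerivAt (by linarith)
      (fun s hs => hasDerivAt_exp_mul_rpow (hderiv s (by linarith)) (hfpos s (by linarith)))
      fun s hs => ?_
    have hs0 : 0 < s := by linarith
    calc α / c * exp (γ / c * (t / 2)) ≤ exp (γ / c * s) * (α / c) := by
          rw [mul_comm]
          gcongr
      _ ≤ exp (γ / c * s) * (γ / c * f s ^ (-(1 / c))
            + f' s * (-(1 / c)) * f s ^ (-(1 / c) - 1)) := by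
          gcongr
          exact div_le_of_le_neg_mul_rpow_add hc (hfpos s hs0) (hineq s hs0)
      _ = _ := by ring
  have hg_half : 0 < g (t / 2) := by
    have := hfpos (t / 2) (by linarith)
    positivity
  have ht_half : t - t / 2 = t / 2 := by ring
  rw [ht_half] at hgrowth
  linarith

lemma inv_exp_mul_mul_rpow_neg (hc : 0 < c) (hα : 0 < α) {t : ℝ} (ht : 0 < t) :
    ((exp (γ / c * (t / 2)))⁻¹ * (α / c * (t / 2))) ^ (-c)
      = (2 * c / α) ^ c * exp (γ * t / 2) * t ^ (-c) := by
  rw [← exp_neg, mul_rpow (exp_pos _).le (by positivity), ← exp_mul,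
    rpow_neg (by positivity), ← inv_rpow (by positivity),
    show (α / c * (t / 2))⁻¹ = 2 * c / α * t⁻¹ by field_simp,
    mul_rpow (by positivity) (inv_nonneg.2 ht.le), inv_rpow ht.le, ← rpow_neg ht.le]
  field_simp

theorem le_mul_exp_mul_rpow_of_deriv_le (hc : 0 < c) (hα : 0 < α) (hγ : 0 ≤ γ)
    (hfpos : ∀ t, 0 < t → 0 < f t) (hderiv : ∀ t, 0 < t → HasDerivAt f (f' t) t)
    (hineq : ∀ t, 0 < t → f' t ≤ -α * f t ^ (1 + 1 / c) + γ * f t) {t : ℝ} (ht : 0 < t) :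
    f t ≤ (2 * c / α) ^ c * exp (γ * t / 2) * t ^ (-c) := by
  have hE : 0 < exp (γ / c * (t / 2)) := exp_pos _
  have hlower : (exp (γ / c * (t / 2)))⁻¹ * (α / c * (t / 2)) ≤ f t ^ (-(1 / c)) := by
    have h := mul_exp_le_exp_mul_rpow_of_deriv_le hc hα.le hγ hfpos hderiv hineq ht
    rw [show γ / c * t = γ / c * (t / 2) + γ / c * (t / 2) by ring, exp_add] at h
    rw [inv_mul_le_iff₀ hE]
    nlinarith
  rw [← inv_exp_mul_mul_rpow_neg hc hα ht]
  refine (le_rpow_inv_iff_of_neg (by positivity) (hfpos t ht) (neg_neg_of_pos hc)).1 ?_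
  rwa [inv_neg, inv_eq_one_div c]

end

theorem nash_ode_comparison (n : ℕ) (hn : 1 ≤ n) (α γ : ℝ) (hα : 0 < α) (hγ : 0 < γ)
    (f f' : ℝ → ℝ) (hfpos : ∀ t, 0 < t → 0 < f t)
    (hderiv : ∀ t, 0 < t → HasDerivAt f (f' t) t)
    (hineq : ∀ t, 0 < t → f' t ≤ -α * (f t) ^ ((1 : ℝ) + 1 / n) + γ * f t) :
    ∀ t, 0 < t → f t ≤ (2 * n / α) ^ (n : ℕ) * Real.exp (γ * t / 2) * t ^ (-(n : ℝ)) := by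
  intro t ht
  have hn' : (0 : ℝ) < n := by exact_mod_cast hn
  rw [← rpow_natCast]
  exact le_mul_exp_mul_rpow_of_deriv_le hn' hα hγ.le hfpos hderiv hineq ht
end
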